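/- For each α ∈ {0, 1, −1}, the family of vector fields on ℝ³ given by L_n = e^{−nt} ∂_t + e^{−nt}[n + (α n(n−1)/2) e^{−x}] ∂_x + (n(n−1)/2) e^{−nt−x} ∂_u (n ∈ ℤ) is a realization of the Witt algebra: [L_m, L_n] = (m−n)L_{m+n} for all m, n ∈ ℤ. (This is the realization 𝔚₁₁ of Theorem 1.) -/

import Mathlib

/-!
Every `W11field α n` has the shape `e^{-kt} (∂_t + (k + α b e^{-x}) ∂_x + b e^{-x} ∂_u)` with
`k = n` and `b = n(n-1)/2`. For two fields of this shape with the same `α`, the `e^{-2x} ∂_u`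
terms of the bracket cancel (the `∂_x`-coefficient is `α` times the `∂_u`-coefficient), and what
remains is `(k - l)` times a field of the same shape with exponent `k + l`, provided its
coefficient `B` satisfies `(k - l) B = (k + l) (b - d)`. The Witt coefficients
`b_n = n(n-1)/2` satisfy this recursion.
-/

/-- Lie bracket of smooth vector fields on `ℝ³` (coordinates `(t,x,u)`), identified with
`C^∞` maps `ℝ³ → ℝ³`: `[X,Y](p) = (DY)(p)(X(p)) - (DX)(p)(Y(p))`. -/
noncomputable def lieBracket3 (X Y : ℝ × ℝ × ℝ → ℝ × ℝ × ℝ) : ℝ × ℝ × ℝ → ℝ × ℝ × ℝ :=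
  fun p => fderiv ℝ Y p (X p) - fderiv ℝ X p (Y p)

/-- The realization `𝔚₁₁`:
`L_n = e^{-nt} ∂_t + e^{-nt}[n + (α n(n-1)/2) e^{-x}] ∂_x + (n(n-1)/2) e^{-nt-x} ∂_u`. -/
noncomputable def W11field (α : ℝ) (n : ℤ) : ℝ × ℝ × ℝ → ℝ × ℝ × ℝ := fun p =>
  (Real.exp (-(n : ℝ) * p.1),
   Real.exp (-(n : ℝ) * p.1) *
     ((n : ℝ) + (α * (n : ℝ) * ((n : ℝ) - 1) / 2) * Real.exp (-p.2.1)),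
   ((n : ℝ) * ((n : ℝ) - 1) / 2) * Real.exp (-(n : ℝ) * p.1 - p.2.1))

section

open Real ContinuousLinearMap

noncomputable def expField (α k b : ℝ) (p : ℝ × ℝ × ℝ) : ℝ × ℝ × ℝ :=
  (exp (-k * p.1), exp (-k * p.1) * (k + α * b * exp (-p.2.1)), b * exp (-k * p.1) * exp (-p.2.1))

lemma fderiv_expField_apply (α k b : ℝ) (p v : ℝ × ℝ × ℝ) :
    fderiv ℝ (expField α k b) p v =
      (-k * exp (-k * p.1) * v.1,
       -k * exp (-k * p.1) * (k + α * b * exp (-p.2.1)) * v.1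
         - α * b * exp (-k * p.1) * exp (-p.2.1) * v.2.1,
       -b * exp (-k * p.1) * exp (-p.2.1) * (k * v.1 + v.2.1)) := by
  have hT : HasFDerivAt (fun q : ℝ × ℝ × ℝ => exp (-k * q.1))
      (exp (-k * p.1) • (-k) • fst ℝ ℝ (ℝ × ℝ)) p :=
    (hasFDerivAt_fst.const_mul (-k)).exp
  have hE : HasFDerivAt (fun q : ℝ × ℝ × ℝ => exp (-q.2.1))
      (exp (-p.2.1) • -((fst ℝ ℝ ℝ).comp (snd ℝ ℝ (ℝ × ℝ)))) p :=
    (hasFDerivAt_fst.comp p hasFDerivAt_snd).neg.exp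
  have H : HasFDerivAt (expField α k b) _ p :=
    hT.prodMk ((hT.mul ((hE.const_mul (α * b)).const_add k)).prodMk ((hT.const_mul b).mul hE))
  rw [H.fderiv]
  simp only [prod_apply, add_apply, smul_apply, neg_apply, comp_apply, coe_fst', coe_snd',
    smul_eq_mul, Prod.mk.injEq]
  refine ⟨by ring, by ring, by ring⟩

lemma lieBracket3_expField (α k l b d B : ℝ) (hB : (k - l) * B = (k + l) * (b - d)) :
    lieBracket3 (expField α k b) (expField α l d) = fun p => (k - l) • expField α (k + l) B p := by
  funext p
  have hexp : exp (-(k + l) * p.1) = exp (-k * p.1) * exp (-l * p.1) := by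
    rw [← exp_add]; ring_nf
  simp only [lieBracket3, fderiv_expField_apply, expField, Prod.smul_mk, smul_eq_mul,
    Prod.mk_sub_mk, Prod.mk.injEq, hexp]
  refine ⟨by ring,
    by linear_combination (-α * exp (-k * p.1) * exp (-l * p.1) * exp (-p.2.1)) * hB,
    by linear_combination (-exp (-k * p.1) * exp (-l * p.1) * exp (-p.2.1)) * hB⟩

lemma W11field_eq_expField (α : ℝ) (n : ℤ) :
    W11field α n = expField α n (n * (n - 1) / 2) := by
  funext p
  simp only [W11field, expField, sub_eq_add_neg (-(n : ℝ) * p.1), exp_add]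
  congr 2 <;> ring

end

theorem W11_realization_general (α : ℝ) :
    ∀ m n : ℤ, lieBracket3 (W11field α m) (W11field α n)
      = fun p => ((m : ℝ) - (n : ℝ)) • W11field α (m + n) p := by
  intro m n
  simp only [W11field_eq_expField, Int.cast_add]
  exact lieBracket3_expField _ _ _ _ _ _ (by ring)

/-- For each `α ∈ {0, 1, -1}`, the family `(W11field α n)` is a realization of the Witt
algebra on `ℝ³`: `[L_m, L_n] = (m - n) L_{m+n}` for all `m, n ∈ ℤ`. -/
theorem W11_realization (α : ℝ) (hα : α = 0 ∨ α = 1 ∨ α = -1) :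
    ∀ m n : ℤ, lieBracket3 (W11field α m) (W11field α n)
      = fun p => ((m : ℝ) - (n : ℝ)) • W11field α (m + n) p :=
  W11_realization_general α
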